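/- For a Markov chain started from a quasi-stationary distribution μ, for every n ≥ 1, i ∈ I and ε ∈ ℰ, one has ℙ_μ(X_{τ_ℰ - 1} = i, X_{τ_ℰ} = ε, τ_ℰ = n) = P(i,ε) μ(i) γ^{n-1}. -/

import Mathlib

open Matrix

theorem Matrix.vecMul_pow_eq_pow_smul_of_vecMul_eq_smul {n R : Type*} [Fintype n] [DecidableEq n]
    [CommSemiring R] {M : Matrix n n R} {v : n → R} {c : R} (hv : v ᵥ* M = c • v) (k : ℕ) :
    v ᵥ* (M ^ k) = c ^ k • v := by
  induction k with
  | zero => simp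
  | succ k ih => rw [pow_succ, ← vecMul_vecMul, ih, smul_vecMul, hv, smul_smul, pow_succ]

theorem qsd_last_state_absorption_joint {I E : Type*} [Fintype I]
    [DecidableEq I]
    (P : Matrix (I ⊕ E) (I ⊕ E) ℝ)
    (PI : Matrix I I ℝ)
    (μ : I → ℝ)
    (γ : ℝ)
    (hqsd : μ ᵥ* PI = γ • μ) :
    ∀ n : ℕ, 1 ≤ n → ∀ (i : I) (ε : E),
      (μ ᵥ* (PI ^ (n - 1))) i * P (Sum.inl i) (Sum.inr ε)
        = P (Sum.inl i) (Sum.inr ε) * μ i * γ ^ (n - 1) := by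
  intro n _ i ε
  rw [vecMul_pow_eq_pow_smul_of_vecMul_eq_smul hqsd, Pi.smul_apply, smul_eq_mul]
  ring
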